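/- Lemma 2 (deterministic form, policy value gap vs confidence width): Let π be any policy that is greedy with respect to the optimistic Q-values, i.e., π_h(s) ∈ argmax_{a∈A} Q̄_h(s,a) for all h ∈ {1,...,H} and s ∈ S. Then for every stage h ∈ {1,...,H} and state s ∈ S, V*_h(s) − V^π_h(s) ≤ 2 Σ_{ℓ=h}^{H} Σ_{s'∈S} p^π_ℓ(s'|s,h) · b_ℓ(s',π_ℓ(s')). -/

import Mathlib

/-- A finite episodic MDP with horizon `H`, initial state `s1`,
transition kernel `p h s a s'` and mean rewards `r h s a` (for stages `h ∈ {1,…,H}`). -/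
structure MDP (S A : Type) [Fintype S] [Fintype A] where
  H : ℕ
  H_pos : 1 ≤ H
  s1 : S
  p : ℕ → S → A → S → ℝ
  r : ℕ → S → A → ℝ
  p_nonneg : ∀ h s a s', 1 ≤ h → h ≤ H → 0 ≤ p h s a s'
  p_sum_one : ∀ h s a, 1 ≤ h → h ≤ H → ∑ s' : S, p h s a s' = 1
  r_nonneg : ∀ h s a, 1 ≤ h → h ≤ H → 0 ≤ r h s a
  r_le_one : ∀ h s a, 1 ≤ h → h ≤ H → r h s a ≤ 1

namespace MDP

variable {S A : Type} [Fintype S] [Fintype A] [DecidableEq S] [DecidableEq A]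
variable (M : MDP S A)

/-- Fuel-indexed value of policy `π`: `polValAux M π k s = V^π_{H+1-k}(s)`. -/
noncomputable def polValAux (π : ℕ → S → A) : ℕ → S → ℝ
  | 0, _ => 0
  | k + 1, s =>
      M.r (M.H - k) s (π (M.H - k) s) +
        ∑ s' : S, M.p (M.H - k) s (π (M.H - k) s) s' * polValAux π k s'

/-- `V^π_h(s)`, for `1 ≤ h ≤ H + 1`. -/
noncomputable def polVal (π : ℕ → S → A) (h : ℕ) (s : S) : ℝ :=
  M.polValAux π (M.H + 1 - h) s

/-- `Q^π_h(s,a)`. -/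
noncomputable def polQ (π : ℕ → S → A) (h : ℕ) (s : S) (a : A) : ℝ :=
  M.r h s a + ∑ s' : S, M.p h s a s' * M.polVal π (h + 1) s'

/-- Fuel-indexed optimal value: `optValAux M k s = V*_{H+1-k}(s)`. -/
noncomputable def optValAux : ℕ → S → ℝ
  | 0, _ => 0
  | k + 1, s =>
      ⨆ a : A, (M.r (M.H - k) s a + ∑ s' : S, M.p (M.H - k) s a s' * optValAux k s')

/-- `V*_h(s)`, for `1 ≤ h ≤ H + 1`. -/
noncomputable def optVal (h : ℕ) (s : S) : ℝ := M.optValAux (M.H + 1 - h) s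

/-- `Q*_h(s,a)`. -/
noncomputable def optQ (h : ℕ) (s : S) (a : A) : ℝ :=
  M.r h s a + ∑ s' : S, M.p h s a s' * M.optVal (h + 1) s'

/-- Visitation probability `p^π_h(s)`, for `1 ≤ h ≤ H`. -/
noncomputable def visit (π : ℕ → S → A) : ℕ → S → ℝ
  | 0, _ => 0
  | 1, s => if s = M.s1 then 1 else 0
  | h + 2, s' => ∑ s : S, visit π (h + 1) s * M.p (h + 1) s (π (h + 1) s) s'

/-- State-action visitation probability `p^π_h(s,a)`. -/
noncomputable def visitSA (π : ℕ → S → A) (h : ℕ) (s : S) (a : A) : ℝ :=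
  if π h s = a then M.visit π h s else 0

/-- Fuel-indexed conditional visitation: `cvisitAux M π s h k s' = p^π_{h+k}(s' | s, h)`. -/
noncomputable def cvisitAux (π : ℕ → S → A) (s : S) (h : ℕ) : ℕ → S → ℝ
  | 0, s' => if s' = s then 1 else 0
  | k + 1, s' =>
      ∑ s'' : S, cvisitAux π s h k s'' * M.p (h + k) s'' (π (h + k) s'') s'

/-- Conditional visitation probability `p^π_ℓ(s' | s, h)`, for `h ≤ ℓ`. -/
noncomputable def cvisit (π : ℕ → S → A) (s : S) (h ℓ : ℕ) (s' : S) : ℝ :=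
  M.cvisitAux π s h (ℓ - h) s'

/-- Value gap `Δ_h(s,a) = V*_h(s) - Q*_h(s,a)`. -/
noncomputable def valGap (h : ℕ) (s : S) (a : A) : ℝ := M.optVal h s - M.optQ h s a

/-- The worst conditional value loss of policy `π`:
`max_{ℓ ∈ [H]} max_{s' : p^π_ℓ(s') > 0} (V*_ℓ(s') - V^π_ℓ(s'))`. -/
noncomputable def condRetGap (π : ℕ → S → A) : ℝ :=
  sSup {x : ℝ | ∃ ℓ, 1 ≤ ℓ ∧ ℓ ≤ M.H ∧ ∃ s' : S,
    M.visit π ℓ s' > 0 ∧ x = M.optVal ℓ s' - M.polVal π ℓ s'}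

/-- Conditional return gap `Δtilde_h(s,a)`. -/
noncomputable def tildeGap (h : ℕ) (s : S) (a : A) : ℝ :=
  sInf {x : ℝ | ∃ π : ℕ → S → A, M.visitSA π h s a > 0 ∧ x = M.condRetGap π}

/-- Return gap `Δbar_h(s,a) = V*_1(s1) - max_{π : p^π_h(s,a) > 0} V^π_1(s1)`. -/
noncomputable def barGap (h : ℕ) (s : S) (a : A) : ℝ :=
  M.optVal 1 M.s1 -
    sSup {x : ℝ | ∃ π : ℕ → S → A, M.visitSA π h s a > 0 ∧ x = M.polVal π 1 M.s1}

end MDP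
namespace MDP

section Estimates

variable {S A : Type} [Fintype S] [Fintype A] [DecidableEq S] [DecidableEq A] [Nonempty A]
variable (M : MDP S A)
variable (rhat : ℕ → S → A → ℝ) (phat : ℕ → S → A → S → ℝ) (b : ℕ → S → A → ℝ)

/-- Fuel-indexed optimistic value: `VbarAux M rhat phat b k s = V̄_{H+1-k}(s)`. -/
noncomputable def VbarAux : ℕ → S → ℝ
  | 0, _ => 0
  | k + 1, s => ⨆ a : A, min ((k : ℝ) + 1)
      (rhat (M.H - k) s a + b (M.H - k) s a +
        ∑ s' : S, phat (M.H - k) s a s' * VbarAux k s')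

/-- Optimistic value `V̄_h(s)`, for `1 ≤ h ≤ H + 1`. -/
noncomputable def Vbar (h : ℕ) (s : S) : ℝ := VbarAux M rhat phat b (M.H + 1 - h) s

/-- Optimistic Q-value `Q̄_h(s,a)`. -/
noncomputable def Qbar (h : ℕ) (s : S) (a : A) : ℝ :=
  min ((M.H : ℝ) - h + 1)
    (rhat h s a + b h s a + ∑ s' : S, phat h s a s' * Vbar M rhat phat b (h + 1) s')

/-- Fuel-indexed pessimistic value: `VlowAux M rhat phat b k s = Vlow_{H+1-k}(s)`. -/
noncomputable def VlowAux : ℕ → S → ℝ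
  | 0, _ => 0
  | k + 1, s => ⨆ a : A, max 0
      (rhat (M.H - k) s a - b (M.H - k) s a +
        ∑ s' : S, phat (M.H - k) s a s' * VlowAux k s')

/-- Pessimistic value `Vlow_h(s)`, for `1 ≤ h ≤ H + 1`. -/
noncomputable def Vlow (h : ℕ) (s : S) : ℝ := VlowAux M rhat phat b (M.H + 1 - h) s

/-- Pessimistic Q-value `Qlow_h(s,a)`. -/
noncomputable def Qlow (h : ℕ) (s : S) (a : A) : ℝ :=
  max 0 (rhat h s a - b h s a + ∑ s' : S, phat h s a s' * Vlow M rhat phat b (h + 1) s')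

variable (π : ℕ → S → A)

/-- Fuel-indexed policy-specific optimistic value `V̄^π`. -/
noncomputable def VbarPolAux : ℕ → S → ℝ
  | 0, _ => 0
  | k + 1, s => min ((k : ℝ) + 1)
      (rhat (M.H - k) s (π (M.H - k) s) + b (M.H - k) s (π (M.H - k) s) +
        ∑ s' : S, phat (M.H - k) s (π (M.H - k) s) s' * VbarPolAux k s')

/-- Policy-specific optimistic value `V̄^π_h(s)`. -/
noncomputable def VbarPol (h : ℕ) (s : S) : ℝ := VbarPolAux M rhat phat b π (M.H + 1 - h) s

/-- Policy-specific optimistic Q-value `Q̄^π_h(s,a)`. -/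
noncomputable def QbarPol (h : ℕ) (s : S) (a : A) : ℝ :=
  min ((M.H : ℝ) - h + 1)
    (rhat h s a + b h s a + ∑ s' : S, phat h s a s' * VbarPol M rhat phat b π (h + 1) s')

/-- Fuel-indexed policy-specific pessimistic value `Vlow^π`. -/
noncomputable def VlowPolAux : ℕ → S → ℝ
  | 0, _ => 0
  | k + 1, s => max 0
      (rhat (M.H - k) s (π (M.H - k) s) - b (M.H - k) s (π (M.H - k) s) +
        ∑ s' : S, phat (M.H - k) s (π (M.H - k) s) s' * VlowPolAux k s')

/-- Policy-specific pessimistic value `Vlow^π_h(s)`. -/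
noncomputable def VlowPol (h : ℕ) (s : S) : ℝ := VlowPolAux M rhat phat b π (M.H + 1 - h) s

/-- Policy-specific pessimistic Q-value `Qlow^π_h(s,a)`. -/
noncomputable def QlowPol (h : ℕ) (s : S) (a : A) : ℝ :=
  max 0 (rhat h s a - b h s a + ∑ s' : S, phat h s a s' * VlowPol M rhat phat b π (h + 1) s')

end Estimates

end MDP

/-!
Backward induction first gives optimism, `V* ≤ V̄`: the concentration condition makes the
optimistic backup `r̂ + b + p̂ V̄` dominate the true one `r + p V*`, using only `V* ∈ [0, H - h]`.
For the greedy policy `π`, `V̄_h(s)` is then at most `r̂ + b + p̂ V̄_{h+1}` at `π_h(s)`, and paying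
with `b` once for the reward error and the transition error against `V̄_{h+1} ∈ [0, H - h]` gives
`V̄_h(s) - V^π_h(s) ≤ 2 b_h(s, π_h s) + Σ p_h(s'|s, π_h s) (V̄_{h+1} - V^π_{h+1})(s')`.
Unrolling this recursion along the trajectory of `π` yields the bonuses weighted by the
conditional visitation probabilities.
-/

open Finset

section WeightedSums

variable {ι : Type*} {t : Finset ι} {p q V : ι → ℝ} {C : ℝ}

lemma sum_mul_le_of_le (hp : ∀ i ∈ t, 0 ≤ p i) (hsum : ∑ i ∈ t, p i = 1)
    (hV : ∀ i ∈ t, V i ≤ C) : ∑ i ∈ t, p i * V i ≤ C :=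
  calc ∑ i ∈ t, p i * V i ≤ ∑ i ∈ t, p i * C :=
        sum_le_sum fun i hi => mul_le_mul_of_nonneg_left (hV i hi) (hp i hi)
    _ = C := by rw [← sum_mul, hsum, one_mul]

lemma sum_mul_sub_sum_mul_le (hV : ∀ i ∈ t, V i ∈ Set.Icc 0 C) :
    ∑ i ∈ t, p i * V i - ∑ i ∈ t, q i * V i ≤ (∑ i ∈ t, |p i - q i|) * C := by
  rw [← sum_sub_distrib, sum_mul]
  refine sum_le_sum fun i hi => ?_
  obtain ⟨hV0, hVC⟩ := hV i hi
  calc p i * V i - q i * V i = (p i - q i) * V i := by ring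
    _ ≤ |p i - q i| * V i := mul_le_mul_of_nonneg_right (le_abs_self _) hV0
    _ ≤ |p i - q i| * C := mul_le_mul_of_nonneg_left hVC (abs_nonneg _)

end WeightedSums

lemma ciSup_mem_Icc {ι : Type*} [Finite ι] [Nonempty ι] {f : ι → ℝ} {a c : ℝ}
    (hf : ∀ i, f i ∈ Set.Icc a c) : ⨆ i, f i ∈ Set.Icc a c :=
  ⟨le_ciSup_of_le (Set.finite_range f).bddAbove (Classical.arbitrary ι) (hf _).1,
    ciSup_le fun i => (hf i).2⟩

namespace MDP

variable {S A : Type} [Fintype S] [Fintype A] (M : MDP S A)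

section BellmanEquations

variable {h : ℕ}

lemma polVal_H_succ (π : ℕ → S → A) (s : S) : M.polVal π (M.H + 1) s = 0 := by
  simp [polVal, polValAux]

lemma polVal_eq_polQ (π : ℕ → S → A) (hhH : h ≤ M.H) (s : S) :
    M.polVal π h s = M.polQ π h s (π h s) := by
  rw [polVal, show M.H + 1 - h = M.H - h + 1 by omega, polValAux, Nat.sub_sub_self hhH]
  simp only [polQ, polVal, Nat.add_sub_add_right]

lemma optVal_H_succ (s : S) : M.optVal (M.H + 1) s = 0 := by
  simp [optVal, optValAux]

lemma optVal_eq_iSup_optQ (hhH : h ≤ M.H) (s : S) :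
    M.optVal h s = ⨆ a, M.optQ h s a := by
  rw [optVal, show M.H + 1 - h = M.H - h + 1 by omega, optValAux, Nat.sub_sub_self hhH]
  simp only [optQ, optVal, Nat.add_sub_add_right]

variable (rhat : ℕ → S → A → ℝ) (phat : ℕ → S → A → S → ℝ) (b : ℕ → S → A → ℝ)

lemma Vbar_H_succ (s : S) : Vbar M rhat phat b (M.H + 1) s = 0 := by
  simp [Vbar, VbarAux]

lemma Vbar_eq_iSup_Qbar (hhH : h ≤ M.H) (s : S) :
    Vbar M rhat phat b h s = ⨆ a, Qbar M rhat phat b h s a := by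
  rw [Vbar, show M.H + 1 - h = M.H - h + 1 by omega, VbarAux, Nat.sub_sub_self hhH]
  simp only [Qbar, Vbar, Nat.add_sub_add_right, Nat.cast_sub hhH]

end BellmanEquations

def IsConfidenceBonus (rhat : ℕ → S → A → ℝ) (phat : ℕ → S → A → S → ℝ) (b : ℕ → S → A → ℝ) :
    Prop :=
  ∀ h s a, 1 ≤ h → h ≤ M.H →
    |rhat h s a - M.r h s a| + ((M.H : ℝ) - h) * ∑ s' : S, |phat h s a s' - M.p h s a s'| ≤ b h s a

section OptimisticValues

variable {rhat : ℕ → S → A → ℝ} {phat : ℕ → S → A → S → ℝ} {b : ℕ → S → A → ℝ} {h : ℕ}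

lemma optQ_le_optVal (hhH : h ≤ M.H) (s : S) (a : A) : M.optQ h s a ≤ M.optVal h s := by
  rw [optVal_eq_iSup_optQ M hhH]
  exact le_ciSup (Set.finite_range _).bddAbove a

lemma optVal_mem_Icc [Nonempty A] (hh1 : 1 ≤ h) (hh : h ≤ M.H + 1) (s : S) :
    M.optVal h s ∈ Set.Icc 0 ((M.H : ℝ) - h + 1) := by
  induction hh using Nat.decreasingInduction generalizing s with
  | self => simp [optVal_H_succ]
  | of_succ k hk ih =>
    rw [optVal_eq_iSup_optQ M (by omega)]
    refine ciSup_mem_Icc fun a => ?_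
    have hp := M.p_nonneg k s a
    have hV := fun s' => ih (by omega) s'
    push_cast at hV
    rw [optQ]
    constructor
    · exact add_nonneg (M.r_nonneg k s a hh1 (by omega))
        (sum_nonneg fun s' _ => mul_nonneg (hp s' hh1 (by omega)) (hV s').1)
    · have := sum_mul_le_of_le (fun s' _ => hp s' hh1 (by omega))
        (M.p_sum_one k s a hh1 (by omega)) fun s' _ => (hV s').2
      linarith [M.r_le_one k s a hh1 (by omega)]

variable {M}

lemma optQ_le_Qbar [Nonempty A] (hphat_nonneg : ∀ h s a s', 1 ≤ h → h ≤ M.H → 0 ≤ phat h s a s')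
    (hconc : M.IsConfidenceBonus rhat phat b) (hh1 : 1 ≤ h) (hhH : h ≤ M.H)
    (hopt : ∀ s', M.optVal (h + 1) s' ≤ Vbar M rhat phat b (h + 1) s') (s : S) (a : A) :
    M.optQ h s a ≤ Qbar M rhat phat b h s a := by
  have hV : ∀ s' ∈ univ, M.optVal (h + 1) s' ∈ Set.Icc 0 ((M.H : ℝ) - h) := fun s' _ => by
    have := M.optVal_mem_Icc (h := h + 1) (by omega) (by omega) s'
    push_cast at this
    exact ⟨this.1, by linarith [this.2]⟩
  refine le_min ((M.optQ_le_optVal hhH s a).trans (M.optVal_mem_Icc hh1 (by omega) s).2) ?_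
  have hdev := sum_mul_sub_sum_mul_le (p := M.p h s a) (q := phat h s a) hV
  have hmono : ∑ s', phat h s a s' * M.optVal (h + 1) s' ≤
      ∑ s', phat h s a s' * Vbar M rhat phat b (h + 1) s' :=
    sum_le_sum fun s' _ => mul_le_mul_of_nonneg_left (hopt s') (hphat_nonneg h s a s' hh1 hhH)
  have hr : M.r h s a - rhat h s a ≤ |rhat h s a - M.r h s a| := by
    rw [abs_sub_comm]; exact le_abs_self _
  have hsymm : ∑ s', |M.p h s a s' - phat h s a s'| = ∑ s', |phat h s a s' - M.p h s a s'| :=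
    sum_congr rfl fun _ _ => abs_sub_comm _ _
  rw [hsymm, mul_comm] at hdev
  have := hconc h s a hh1 hhH
  rw [optQ]
  linarith

lemma optVal_le_Vbar [Nonempty A] (hphat_nonneg : ∀ h s a s', 1 ≤ h → h ≤ M.H → 0 ≤ phat h s a s')
    (hconc : M.IsConfidenceBonus rhat phat b) (hh1 : 1 ≤ h) (hh : h ≤ M.H + 1) (s : S) :
    M.optVal h s ≤ Vbar M rhat phat b h s := by
  induction hh using Nat.decreasingInduction generalizing s with
  | self => rw [optVal_H_succ, Vbar_H_succ]
  | of_succ k hk ih =>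
    rw [optVal_eq_iSup_optQ M (by omega), Vbar_eq_iSup_Qbar M rhat phat b (by omega)]
    exact ciSup_mono (Set.finite_range _).bddAbove
      (optQ_le_Qbar hphat_nonneg hconc hh1 (by omega) (ih (by omega)) s)

lemma Vbar_mem_Icc [Nonempty A] (hphat_nonneg : ∀ h s a s', 1 ≤ h → h ≤ M.H → 0 ≤ phat h s a s')
    (hconc : M.IsConfidenceBonus rhat phat b) (hh1 : 1 ≤ h) (hh : h ≤ M.H + 1) (s : S) :
    Vbar M rhat phat b h s ∈ Set.Icc 0 ((M.H : ℝ) - h + 1) := by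
  refine ⟨(M.optVal_mem_Icc hh1 hh s).1.trans (optVal_le_Vbar hphat_nonneg hconc hh1 hh s), ?_⟩
  rcases hh.eq_or_lt with rfl | hlt
  · simp [Vbar_H_succ]
  · rw [Vbar_eq_iSup_Qbar M rhat phat b (by omega)]
    exact ciSup_le fun a => min_le_left _ _

lemma Vbar_sub_polVal_le_of_greedy (hphat_nonneg : ∀ h s a s', 1 ≤ h → h ≤ M.H → 0 ≤ phat h s a s')
    (hconc : M.IsConfidenceBonus rhat phat b) (π : ℕ → S → A) (hh1 : 1 ≤ h) (hhH : h ≤ M.H)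
    (s : S) (hgreedy : ∀ a, Qbar M rhat phat b h s a ≤ Qbar M rhat phat b h s (π h s)) :
    Vbar M rhat phat b h s - M.polVal π h s ≤ 2 * b h s (π h s) +
      ∑ s', M.p h s (π h s) s' * (Vbar M rhat phat b (h + 1) s' - M.polVal π (h + 1) s') := by
  have : Nonempty A := ⟨π h s⟩
  set a := π h s
  have hVbar : Vbar M rhat phat b h s ≤
      rhat h s a + b h s a + ∑ s', phat h s a s' * Vbar M rhat phat b (h + 1) s' := by
    rw [Vbar_eq_iSup_Qbar M rhat phat b hhH]
    exact (ciSup_le hgreedy).trans (min_le_right _ _)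
  have hV : ∀ s' ∈ univ, Vbar M rhat phat b (h + 1) s' ∈ Set.Icc 0 ((M.H : ℝ) - h) :=
    fun s' _ => by
      have := Vbar_mem_Icc (h := h + 1) hphat_nonneg hconc (by omega) (by omega) s'
      push_cast at this
      exact ⟨this.1, by linarith [this.2]⟩
  have hdev := sum_mul_sub_sum_mul_le (p := phat h s a) (q := M.p h s a) hV
  rw [mul_comm] at hdev
  have := hconc h s a hh1 hhH
  rw [M.polVal_eq_polQ π hhH, polQ]
  simp only [mul_sub, sum_sub_distrib]
  linarith [le_abs_self (rhat h s a - M.r h s a)]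

end OptimisticValues

section ConditionalVisitation

variable [DecidableEq S] (π : ℕ → S → A)

lemma cvisitAux_succ (h : ℕ) (s : S) (j : ℕ) (s' : S) :
    M.cvisitAux π s h (j + 1) s' =
      ∑ s'', M.p h s (π h s) s'' * M.cvisitAux π s'' (h + 1) j s' := by
  induction j generalizing s' with
  | zero => simp [cvisitAux]
  | succ j ih =>
    rw [cvisitAux]
    simp only [ih, sum_mul, mul_assoc]
    rw [sum_comm]
    refine sum_congr rfl fun s'' _ => ?_
    rw [cvisitAux, mul_sum, add_right_comm, add_assoc]

lemma cvisit_self (h : ℕ) (s s' : S) : M.cvisit π s h h s' = if s' = s then 1 else 0 := by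
  simp [cvisit, cvisitAux]

lemma cvisit_eq_sum_of_lt {h ℓ : ℕ} (hℓ : h < ℓ) (s s' : S) :
    M.cvisit π s h ℓ s' = ∑ s'', M.p h s (π h s) s'' * M.cvisit π s'' (h + 1) ℓ s' := by
  rw [cvisit, show ℓ - h = ℓ - (h + 1) + 1 by omega, cvisitAux_succ]
  rfl

lemma sum_Icc_cvisit_mul_eq (f : ℕ → S → ℝ) {h N : ℕ} (hN : h ≤ N) (s : S) :
    ∑ ℓ ∈ Icc h N, ∑ s', M.cvisit π s h ℓ s' * f ℓ s' =
      f h s + ∑ s'', M.p h s (π h s) s'' *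
        ∑ ℓ ∈ Icc (h + 1) N, ∑ s', M.cvisit π s'' (h + 1) ℓ s' * f ℓ s' := by
  rw [← insert_Icc_add_one_left_eq_Icc hN, sum_insert (by simp)]
  congr 1
  · simp [cvisit_self]
  · calc ∑ ℓ ∈ Icc (h + 1) N, ∑ s', M.cvisit π s h ℓ s' * f ℓ s'
        = ∑ ℓ ∈ Icc (h + 1) N, ∑ s', ∑ s'',
            M.p h s (π h s) s'' * (M.cvisit π s'' (h + 1) ℓ s' * f ℓ s') := by
          refine sum_congr rfl fun ℓ hℓ => sum_congr rfl fun s' _ => ?_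
          rw [cvisit_eq_sum_of_lt M π (by simp at hℓ; omega), sum_mul]
          simp only [mul_assoc]
      _ = _ := by
          simp only [mul_sum]
          exact (sum_congr rfl fun ℓ _ => sum_comm).trans sum_comm

lemma le_sum_cvisit_mul_of_le_step (g c : ℕ → S → ℝ) (hterm : ∀ s, g (M.H + 1) s ≤ 0)
    (hstep : ∀ h, 1 ≤ h → h ≤ M.H → ∀ s,
      g h s ≤ c h s + ∑ s', M.p h s (π h s) s' * g (h + 1) s')
    {h : ℕ} (hh1 : 1 ≤ h) (hh : h ≤ M.H + 1) (s : S) :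
    g h s ≤ ∑ ℓ ∈ Icc h M.H, ∑ s', M.cvisit π s h ℓ s' * c ℓ s' := by
  induction hh using Nat.decreasingInduction generalizing s with
  | self => simpa using hterm s
  | of_succ k hk ih =>
    rw [sum_Icc_cvisit_mul_eq M π c (by omega)]
    refine (hstep k hh1 (by omega) s).trans (add_le_add le_rfl (sum_le_sum fun s' _ => ?_))
    exact mul_le_mul_of_nonneg_left (ih (by omega) s') (M.p_nonneg k s (π k s) s' hh1 (by omega))

end ConditionalVisitation

end MDP

theorem value_gap_le_conf_width_general {S A : Type} [Fintype S] [Fintype A]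
    [DecidableEq S] (M : MDP S A)
    (rhat : ℕ → S → A → ℝ) (phat : ℕ → S → A → S → ℝ) (b : ℕ → S → A → ℝ)
    (hphat_nonneg : ∀ h s a s', 1 ≤ h → h ≤ M.H → 0 ≤ phat h s a s')
    (hconc : ∀ h s a, 1 ≤ h → h ≤ M.H →
      |rhat h s a - M.r h s a| +
        ((M.H : ℝ) - h) * ∑ s' : S, |phat h s a s' - M.p h s a s'| ≤ b h s a)
    (π : ℕ → S → A)
    (hgreedy : ∀ h s, 1 ≤ h → h ≤ M.H → ∀ a : A,
      MDP.Qbar M rhat phat b h s a ≤ MDP.Qbar M rhat phat b h s (π h s))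
    (h : ℕ) (hh1 : 1 ≤ h) (hhH : h ≤ M.H) (s : S) :
    M.optVal h s - M.polVal π h s ≤
      2 * ∑ ℓ ∈ Finset.Icc h M.H, ∑ s' : S, M.cvisit π s h ℓ s' * b ℓ s' (π ℓ s') := by
  have : Nonempty A := ⟨π h s⟩
  have hoptimism := MDP.optVal_le_Vbar hphat_nonneg hconc hh1 (by omega) s
  have hunroll := M.le_sum_cvisit_mul_of_le_step π
    (fun h s => MDP.Vbar M rhat phat b h s - M.polVal π h s) (fun h s => 2 * b h s (π h s))
    (fun s => by simp [MDP.Vbar_H_succ, MDP.polVal_H_succ])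
    (fun h hh1 hhH s => MDP.Vbar_sub_polVal_le_of_greedy hphat_nonneg hconc π hh1 hhH s (hgreedy h s hh1 hhH))
    hh1 (by omega) s
  simp only [Finset.mul_sum, mul_left_comm _ (2 : ℝ)] at hunroll ⊢
  linarith

/-- Lemma 2 (deterministic form): the value loss of a policy greedy w.r.t. the optimistic
Q-values is bounded by twice the expected sum of bonuses along its trajectory. -/
theorem value_gap_le_conf_width {S A : Type} [Fintype S] [Nonempty S] [Fintype A] [Nonempty A]
    [DecidableEq S] [DecidableEq A] (M : MDP S A)
    (rhat : ℕ → S → A → ℝ) (phat : ℕ → S → A → S → ℝ) (b : ℕ → S → A → ℝ)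
    (hphat_nonneg : ∀ h s a s', 1 ≤ h → h ≤ M.H → 0 ≤ phat h s a s')
    (hphat_sum : ∀ h s a, 1 ≤ h → h ≤ M.H → ∑ s' : S, phat h s a s' = 1)
    (hb_nonneg : ∀ h s a, 1 ≤ h → h ≤ M.H → 0 ≤ b h s a)
    (hconc : ∀ h s a, 1 ≤ h → h ≤ M.H →
      |rhat h s a - M.r h s a| +
        ((M.H : ℝ) - h) * ∑ s' : S, |phat h s a s' - M.p h s a s'| ≤ b h s a)
    (π : ℕ → S → A)
    (hgreedy : ∀ h s, 1 ≤ h → h ≤ M.H → ∀ a : A,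
      MDP.Qbar M rhat phat b h s a ≤ MDP.Qbar M rhat phat b h s (π h s))
    (h : ℕ) (hh1 : 1 ≤ h) (hhH : h ≤ M.H) (s : S) :
    M.optVal h s - M.polVal π h s ≤
      2 * ∑ ℓ ∈ Finset.Icc h M.H, ∑ s' : S, M.cvisit π s h ℓ s' * b ℓ s' (π ℓ s') :=
  value_gap_le_conf_width_general M rhat phat b hphat_nonneg hconc π hgreedy h hh1 hhH s
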